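/- Let n ≥ 2, let U′ be a unitary in the Clifford+CS group 𝒥ₙ^{CS}, and let P₁, P₂ be distinct commuting non-identity n-qubit Pauli matrices. Then sde₂(Ĝ_{P₁P₂} · Û′) − sde₂(Û′) ∈ {−1, 0, 1}, where Ĝ_{P₁P₂} and Û′ are the channel representations of G_{P₁P₂} and U′. -/

import Mathlib

open Matrix Complex

/-- Length-`n` vectors over `𝔽₂`, indexing computational basis states of `n` qubits. -/
abbrev QVec (n : ℕ) := Fin n → ZMod 2

/-- Integer (here: natural number) dot product of two 0/1 vectors. -/
def dotN {n : ℕ} (a b : QVec n) : ℕ := ∑ i, (a i).val * (b i).val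

/-- The `n`-qubit Pauli matrix `P_{a,b}`. -/
noncomputable def Pauli {n : ℕ} (a b : QVec n) : Matrix (QVec n) (QVec n) ℂ :=
  fun x y => if x = y + a then Complex.I ^ dotN a b * (-1 : ℂ) ^ dotN b y else 0

/-- A `2^n × 2^n` unitary is Clifford if it maps every Pauli matrix to a
Pauli matrix up to a sign `±1`, under conjugation. -/
def IsClifford {n : ℕ} (C : Matrix (QVec n) (QVec n) ℂ) : Prop :=
  C ∈ Matrix.unitaryGroup (QVec n) ℂ ∧
    ∀ a b : QVec n, ∃ a' b' : QVec n, ∃ ε : ℂ, (ε = 1 ∨ ε = -1) ∧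
      C * Pauli a b * Cᴴ = ε • Pauli a' b'

/-- The channel representation `Û` of a `2^n × 2^n` matrix `U`:
rows/columns indexed by Pauli matrices, `Û_{rs} = (1/2^n) Tr(P_r U P_s U†)`. -/
noncomputable def chan {n : ℕ} (U : Matrix (QVec n) (QVec n) ℂ) :
    Matrix (QVec n × QVec n) (QVec n × QVec n) ℂ :=
  fun r s => ((1 : ℂ) / 2 ^ n) * Matrix.trace (Pauli r.1 r.2 * U * Pauli s.1 s.2 * Uᴴ)

/-- The gate `CS ⊗ I_{2^{n-2}}`, where `CS = diag(1,1,1,i)` acts on the first two qubits. -/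
noncomputable def CSgate (n : ℕ) : Matrix (QVec n) (QVec n) ℂ :=
  Matrix.diagonal fun x =>
    if h : 1 < n then
      (if x ⟨0, Nat.lt_of_lt_of_le Nat.zero_lt_one h.le⟩ = 1 ∧ x ⟨1, h⟩ = 1 then Complex.I else 1)
    else 1

/-- The Clifford+CS group `𝒥ₙ^{CS}`: the subgroup of the unitary group generated by the
Clifford unitaries together with `CS ⊗ I_{2^{n-2}}`. -/
noncomputable def CliffordCSGroup (n : ℕ) : Subgroup (Matrix.unitaryGroup (QVec n) ℂ) :=
  Subgroup.closure
    {u | IsClifford (u : Matrix (QVec n) (QVec n) ℂ) ∨ (u : Matrix (QVec n) (QVec n) ℂ) = CSgate n}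

/-- `G_{P₁P₂} = ((3+i)/4) I + ((1−i)/4)(P₁ + P₂ − P₁P₂)`. -/
noncomputable def Ggate {n : ℕ} (P₁ P₂ : Matrix (QVec n) (QVec n) ℂ) :
    Matrix (QVec n) (QVec n) ℂ :=
  ((3 + Complex.I) / 4) • (1 : Matrix (QVec n) (QVec n) ℂ) +
    ((1 - Complex.I) / 4) • (P₁ + P₂ - P₁ * P₂)

/-- The smallest 2-denominator exponent of a dyadic rational `x ∈ ℤ[1/2]`: the least
`k ∈ ℕ` with `2^k x ∈ ℤ` (and `0` by convention when no such `k` exists, in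
particular `sde₂(0) = 0`). -/
noncomputable def sde2 (x : ℂ) : ℕ :=
  sInf {k : ℕ | ∃ a : ℤ, (2 : ℂ) ^ k * x = (a : ℂ)}

/-- The 2-sde of a matrix: the maximum of the 2-sde over its entries. -/
noncomputable def sde2Mat {ι : Type*} [Fintype ι] (M : Matrix ι ι ℂ) : ℕ :=
  Finset.univ.sup fun p : ι × ι => sde2 (M p.1 p.2)

namespace SdeAux
variable {n : ℕ}

lemma zmod2_cases (z : ZMod 2) : z = 0 ∨ z = 1 := by revert z; decide

lemma zmod2_sum (f : ZMod 2 → ℂ) : ∑ z : ZMod 2, f z = f 0 + f 1 := by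
  have h : (Finset.univ : Finset (ZMod 2)) = {0, 1} := by decide
  rw [h, Finset.sum_insert (by decide), Finset.sum_singleton]

lemma pow_mod_two (x : ℂ) (h : x * x = 1) (m : ℕ) : x ^ m = x ^ (m % 2) := by
  conv_lhs => rw [← Nat.div_add_mod m 2]
  rw [pow_add, pow_mul, show x ^ 2 = 1 by rw [pow_two, h], one_pow, one_mul]

lemma neg_one_pow_congr {m k : ℕ} (h : m % 2 = k % 2) : ((-1 : ℂ)) ^ m = (-1) ^ k := by
  rw [pow_mod_two (-1) (by norm_num) m, pow_mod_two (-1) (by norm_num) k, h]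

lemma dotN_comm (a b : QVec n) : dotN a b = dotN b a := by
  unfold dotN; exact Finset.sum_congr rfl fun i _ => Nat.mul_comm _ _

lemma dotN_mod_add_right (b y c : QVec n) :
    dotN b (y + c) % 2 = (dotN b y + dotN b c) % 2 := by
  unfold dotN
  rw [← Finset.sum_add_distrib, Finset.sum_nat_mod]
  conv_rhs => rw [Finset.sum_nat_mod]
  congr 1
  refine Finset.sum_congr rfl fun i _ => ?_
  have hp : ((b + c)) = 0 ∨ True := Or.inr trivial
  show (b i).val * ((y i + c i)).val % 2 = _
  rcases zmod2_cases (b i) with hb | hb <;> rcases zmod2_cases (y i) with hy | hy <;>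
    rcases zmod2_cases (c i) with hc | hc <;> rw [hb, hy, hc] <;> decide

lemma neg_one_dotN_add_right (b y c : QVec n) :
    ((-1 : ℂ)) ^ dotN b (y + c) = (-1) ^ dotN b y * (-1) ^ dotN b c := by
  rw [← pow_add]; exact neg_one_pow_congr (dotN_mod_add_right b y c)

lemma neg_one_dotN_add_left (b d z : QVec n) :
    ((-1 : ℂ)) ^ dotN (b + d) z = (-1) ^ dotN b z * (-1) ^ dotN d z := by
  rw [← pow_add]
  refine neg_one_pow_congr ?_
  rw [dotN_comm (b+d) z, dotN_comm b z, dotN_comm d z]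
  exact dotN_mod_add_right z b d

lemma qvec_add_self (a : QVec n) : a + a = 0 := by
  funext i; show a i + a i = 0
  rcases zmod2_cases (a i) with h | h <;> rw [h] <;> decide

lemma qvec_add_add (x a : QVec n) : x + a + a = x := by
  rw [add_assoc, qvec_add_self, add_zero]

lemma qvec_eq_add_iff {x y a : QVec n} : x = y + a ↔ y = x + a := by
  constructor <;> intro h <;> rw [h, qvec_add_add]

lemma qvec_add_eq_zero_iff {a c : QVec n} : a + c = 0 ↔ a = c := by
  constructor
  · intro h
    have : a + c + c = 0 + c := by rw [h]
    rwa [qvec_add_add, zero_add] at this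
  · intro h; rw [h, qvec_add_self]

lemma dotN_zero_left (b : QVec n) : dotN (0 : QVec n) b = 0 := by
  unfold dotN; simp [ZMod.val_zero]

lemma dotN_zero_right (b : QVec n) : dotN b (0 : QVec n) = 0 := by
  rw [dotN_comm]; exact dotN_zero_left b

lemma char_sum (u : QVec n) :
    ∑ d : QVec n, ((-1 : ℂ)) ^ dotN d u = if u = 0 then (2 : ℂ) ^ n else 0 := by
  have h1 : ∀ d : QVec n, ((-1:ℂ)) ^ dotN d u = ∏ i, ((-1:ℂ)) ^ ((d i).val * (u i).val) := by
    intro d; rw [dotN, ← Finset.prod_pow_eq_pow_sum]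
  simp_rw [h1]
  rw [← Fintype.prod_sum (fun (i : Fin n) (z : ZMod 2) => ((-1:ℂ)) ^ ((z).val * (u i).val))]
  by_cases hu : u = 0
  · subst hu
    rw [if_pos rfl]
    have : ∀ i : Fin n, ∑ z : ZMod 2, ((-1:ℂ)) ^ ((z).val * ((0:QVec n) i).val) = 2 := by
      intro i; rw [zmod2_sum]; norm_num
    rw [Finset.prod_congr rfl fun i _ => this i, Finset.prod_const, Finset.card_univ,
      Fintype.card_fin]
  · rw [if_neg hu]
    obtain ⟨i, hi⟩ := Function.ne_iff.mp hu
    refine Finset.prod_eq_zero (Finset.mem_univ i) ?_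
    have hui : u i = 1 := by
      rcases zmod2_cases (u i) with h | h
      · exact absurd h hi
      · exact h
    rw [hui, zmod2_sum]
    norm_num [ZMod.val_one]
lemma trace_pauli (a b : QVec n) :
    Matrix.trace (Pauli a b) = if a = 0 ∧ b = 0 then (2:ℂ)^n else 0 := by
  rw [Matrix.trace]
  by_cases ha : a = 0
  · subst ha
    have h1 : ∀ x : QVec n, Matrix.diag (Pauli 0 b) x = (-1:ℂ) ^ dotN b x := by
      intro x
      simp only [Matrix.diag, Pauli, add_zero, if_pos rfl, dotN_zero_left, pow_zero, one_mul,
        if_true]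
    rw [Finset.sum_congr rfl fun x _ => h1 x]
    have h2 : ∀ x : QVec n, ((-1:ℂ)) ^ dotN b x = ((-1:ℂ)) ^ dotN x b := by
      intro x; rw [dotN_comm]
    rw [Finset.sum_congr rfl fun x _ => h2 x, char_sum]
    by_cases hb : b = 0
    · simp [hb]
    · simp [hb]
  · have h1 : ∀ x : QVec n, Matrix.diag (Pauli a b) x = 0 := by
      intro x
      simp only [Matrix.diag, Pauli]
      rw [if_neg]
      intro h
      exact ha (by rwa [left_eq_add] at h)
    rw [Finset.sum_congr rfl fun x _ => h1 x]
    simp [ha]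

noncomputable def phase (a b c d : QVec n) : ℂ :=
  Complex.I ^ (dotN a b + dotN c d) * (-1 : ℂ) ^ dotN b c *
    (-Complex.I) ^ dotN (a + c) (b + d)

lemma pauli_mul (a b c d : QVec n) :
    Pauli a b * Pauli c d = phase a b c d • Pauli (a + c) (b + d) := by
  ext x z
  rw [Matrix.mul_apply, Matrix.smul_apply]
  rw [Finset.sum_eq_single (z + c)]
  · show Pauli a b x (z + c) * Pauli c d (z + c) z = _
    simp only [Pauli, if_pos rfl, if_true]
    by_cases hx : x = z + c + a
    · rw [if_pos hx, if_pos (by rw [hx, add_assoc, add_comm c a, ← add_assoc])]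
      rw [smul_eq_mul, phase]
      rw [neg_one_dotN_add_right b z c, neg_one_dotN_add_left b d z, pow_add]
      have hI2 : Complex.I ^ (dotN (a+c) (b+d) * 2) * (-1:ℂ) ^ dotN (a+c) (b+d) = 1 := by
        rw [mul_comm (dotN (a+c) (b+d)) 2, pow_mul, Complex.I_sq, ← mul_pow]
        norm_num
      linear_combination (-(Complex.I ^ dotN a b * Complex.I ^ dotN c d *
        (-1:ℂ) ^ dotN b c * (-1:ℂ) ^ dotN b z * (-1:ℂ) ^ dotN d z)) * hI2
    · rw [if_neg hx, if_neg (fun h => hx (by rw [h, add_assoc, add_comm a c, ← add_assoc]))]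
      simp
  · intro y _ hy
    show Pauli a b x y * Pauli c d y z = 0
    have : Pauli c d y z = 0 := by
      simp only [Pauli]; rw [if_neg hy]
    rw [this, mul_zero]
  · intro h; exact absurd (Finset.mem_univ _) h

lemma pauli_conjTranspose (a b : QVec n) : (Pauli a b)ᴴ = Pauli a b := by
  ext x y
  rw [Matrix.conjTranspose_apply]
  show star (Pauli a b y x) = Pauli a b x y
  simp only [Pauli]
  by_cases h : y = x + a
  · have h' : x = y + a := qvec_eq_add_iff.mp h
    rw [if_pos h, if_pos h']
    have hc1 : (starRingEnd ℂ) (-1 : ℂ) = -1 := by simp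
    rw [star_mul', star_pow, star_pow, Complex.star_def, Complex.conj_I, hc1]
    rw [h', neg_one_dotN_add_right b y a, dotN_comm b a]
    have key : (-Complex.I) ^ dotN a b * (-1:ℂ) ^ dotN a b = Complex.I ^ dotN a b := by
      rw [← mul_pow]; norm_num
    linear_combination ((-1:ℂ) ^ dotN b y) * key
  · rw [if_neg h, if_neg (fun h' => h (qvec_eq_add_iff.mp h')), star_zero]

lemma pauli_zero_zero : (Pauli (0:QVec n) 0) = 1 := by
  ext x y
  simp [Pauli, Matrix.one_apply, dotN_zero_left, eq_comm]

lemma dotN_zero_zero : dotN (0 : QVec n) 0 = 0 := dotN_zero_left 0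

lemma phase_self (a b : QVec n) : phase a b a b = 1 := by
  unfold phase
  rw [qvec_add_self, qvec_add_self, dotN_zero_zero, pow_zero, mul_one]
  rw [dotN_comm b a, ← two_mul, pow_mul, Complex.I_sq, ← mul_pow]
  norm_num

lemma pauli_sq (a b : QVec n) : Pauli a b * Pauli a b = 1 := by
  rw [pauli_mul, phase_self, one_smul, qvec_add_self, qvec_add_self, pauli_zero_zero]

lemma trace_pauli_mul (a b c d : QVec n) :
    Matrix.trace (Pauli a b * Pauli c d) = if a = c ∧ b = d then (2:ℂ)^n else 0 := by
  rw [pauli_mul, Matrix.trace_smul, trace_pauli, smul_eq_mul]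
  by_cases h : a = c ∧ b = d
  · obtain ⟨h1, h2⟩ := h
    subst h1; subst h2
    rw [if_pos ⟨qvec_add_self a, qvec_add_self b⟩, if_pos ⟨rfl, rfl⟩, phase_self, one_mul]
  · rw [if_neg h, if_neg, mul_zero]
    intro ⟨h1, h2⟩
    exact h ⟨qvec_add_eq_zero_iff.mp h1, qvec_add_eq_zero_iff.mp h2⟩
lemma trace_pauli_mul_matrix (c d : QVec n) (M : Matrix (QVec n) (QVec n) ℂ) :
    Matrix.trace (Pauli c d * M) =
      ∑ w : QVec n, Complex.I ^ dotN c d * (-1:ℂ) ^ dotN d w * M w (w + c) := by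
  rw [Matrix.trace]
  have h1 : ∀ v : QVec n, Matrix.diag (Pauli c d * M) v
      = Complex.I ^ dotN c d * (-1:ℂ) ^ dotN d (v + c) * M (v + c) v := by
    intro v
    rw [Matrix.diag, Matrix.mul_apply, Finset.sum_eq_single (v + c)]
    · show Pauli c d v (v + c) * M (v + c) v = _
      simp only [Pauli]
      rw [if_pos (qvec_add_add v c).symm, mul_assoc]
    · intro y _ hy
      have : Pauli c d v y = 0 := by
        simp only [Pauli]
        rw [if_neg]
        intro h
        exact hy (by rw [qvec_eq_add_iff.mp h])
      rw [this, zero_mul]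
    · intro h; exact absurd (Finset.mem_univ _) h
  rw [Finset.sum_congr rfl fun v _ => h1 v]
  refine Fintype.sum_equiv (Equiv.addRight c) _ _ fun w => ?_
  simp only [Equiv.coe_addRight]
  rw [qvec_add_add]

lemma pauli_expansion (M : Matrix (QVec n) (QVec n) ℂ) :
    ∑ t : QVec n × QVec n,
      (((1:ℂ)/2^n) * Matrix.trace (Pauli t.1 t.2 * M)) • Pauli t.1 t.2 = M := by
  have h2n : (2:ℂ)^n ≠ 0 := pow_ne_zero _ two_ne_zero
  ext x y
  rw [Matrix.sum_apply, Fintype.sum_prod_type]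
  rw [Finset.sum_eq_single (x + y)]
  · -- ∑ d, ((1/2^n) * Tr(P_{x+y,d} M)) • P_{x+y,d} x y = M x y
    have hx : x = y + (x + y) := by
      rw [add_comm x y, ← add_assoc, qvec_add_self, zero_add]
    have hPxy : ∀ d : QVec n, Pauli (x+y) d x y
        = Complex.I ^ dotN (x+y) d * (-1:ℂ) ^ dotN d y := by
      intro d
      simp only [Pauli]
      rw [if_pos hx, dotN_comm d y]
    calc ∑ d : QVec n, (((1:ℂ)/2^n) * Matrix.trace (Pauli (x+y) d * M)) • Pauli (x+y) d x y
        = ∑ d : QVec n, ∑ w : QVec n, ((1:ℂ)/2^n) *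
            (Complex.I ^ dotN (x+y) d * Complex.I ^ dotN (x+y) d *
             ((-1:ℂ) ^ dotN d w * (-1:ℂ) ^ dotN d y)) * M w (w + (x+y)) := by
          refine Finset.sum_congr rfl fun d _ => ?_
          rw [smul_eq_mul, hPxy d, trace_pauli_mul_matrix, Finset.mul_sum, Finset.sum_mul]
          refine Finset.sum_congr rfl fun w _ => ?_
          ring
      _ = ∑ w : QVec n, ((1:ℂ)/2^n) * (∑ d : QVec n, (-1:ℂ) ^ dotN d ((x+y) + w + y)) *
            M w (w + (x+y)) := by
          rw [Finset.sum_comm]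
          refine Finset.sum_congr rfl fun w _ => ?_
          rw [Finset.mul_sum, Finset.sum_mul]
          refine Finset.sum_congr rfl fun d _ => ?_
          have e1 : Complex.I ^ dotN (x+y) d * Complex.I ^ dotN (x+y) d
              = (-1:ℂ) ^ dotN d (x+y) := by
            rw [← pow_add, ← two_mul, pow_mul, Complex.I_sq, dotN_comm]
          rw [e1, neg_one_dotN_add_right d ((x+y)+w) y, neg_one_dotN_add_right d (x+y) w]
          ring
      _ = M x y := by
          have hcollapse : ∀ w : QVec n,
              (∑ d : QVec n, (-1:ℂ) ^ dotN d ((x+y) + w + y)) = if w = x then (2:ℂ)^n else 0 := by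
            intro w
            have hcond : ((x+y) + w + y = 0) ↔ w = x := by
              constructor
              · intro h
                have h2 := qvec_add_eq_zero_iff.mp
                  (show (x + y + y) + w = 0 from by rw [← h]; abel)
                rw [qvec_add_add] at h2
                exact h2.symm
              · intro h
                rw [h]
                rw [show x + y + x + y = (x + x) + (y + y) from by abel,
                  qvec_add_self, qvec_add_self, add_zero]
            rw [char_sum, if_congr hcond rfl rfl]
          have hite : ∀ w : QVec n, ((1:ℂ)/2^n) * (if w = x then (2:ℂ)^n else 0) * M w (w + (x+y))
              = if w = x then M w (w + (x+y)) else 0 := by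
            intro w
            split
            · field_simp
            · ring
          rw [Finset.sum_congr rfl fun w _ => by rw [hcollapse w, hite w]]
          rw [Finset.sum_ite_eq' Finset.univ x (fun w => M w (w + (x+y)))]
          rw [if_pos (Finset.mem_univ x)]
          congr 1
          rw [← add_assoc, qvec_add_self, zero_add]
  · intro c _ hc
    refine Finset.sum_eq_zero fun d _ => ?_
    have hz : Pauli c d x y = 0 := by
      simp only [Pauli]
      rw [if_neg]
      intro h
      exact hc (by rw [h, add_comm y c, qvec_add_add])
    show (((1:ℂ)/2^n * Matrix.trace (Pauli c d * M)) • Pauli c d) x y = 0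
    rw [Matrix.smul_apply, hz, smul_zero]
  · intro h; exact absurd (Finset.mem_univ _) h
lemma chan_apply (U : Matrix (QVec n) (QVec n) ℂ) (r s : QVec n × QVec n) :
    chan U r s = ((1:ℂ)/2^n) * Matrix.trace (Pauli r.1 r.2 * U * Pauli s.1 s.2 * Uᴴ) := rfl

lemma chan_mul (U V : Matrix (QVec n) (QVec n) ℂ) : chan (U * V) = chan U * chan V := by
  ext r s
  rw [Matrix.mul_apply]
  show ((1:ℂ)/2^n) * Matrix.trace (Pauli r.1 r.2 * (U * V) * Pauli s.1 s.2 * (U * V)ᴴ) = _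
  rw [Matrix.conjTranspose_mul]
  rw [show Pauli r.1 r.2 * (U * V) * Pauli s.1 s.2 * (Vᴴ * Uᴴ)
      = Pauli r.1 r.2 * U * (V * Pauli s.1 s.2 * Vᴴ) * Uᴴ from by
    simp only [Matrix.mul_assoc]]
  conv_lhs => rw [← pauli_expansion (V * Pauli s.1 s.2 * Vᴴ)]
  rw [Matrix.mul_sum, Matrix.sum_mul, Matrix.trace_sum, Finset.mul_sum]
  refine Finset.sum_congr rfl fun t _ => ?_
  rw [mul_smul_comm, smul_mul_assoc, Matrix.trace_smul, smul_eq_mul]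
  rw [show Pauli t.1 t.2 * (V * Pauli s.1 s.2 * Vᴴ)
      = Pauli t.1 t.2 * V * Pauli s.1 s.2 * Vᴴ from by simp only [Matrix.mul_assoc]]
  simp only [chan]
  ring

lemma chan_one : chan (1 : Matrix (QVec n) (QVec n) ℂ) = 1 := by
  ext r s
  show ((1:ℂ)/2^n) * Matrix.trace (Pauli r.1 r.2 * 1 * Pauli s.1 s.2 * (1ᴴ)) = _
  rw [Matrix.conjTranspose_one, Matrix.mul_one, Matrix.mul_one, trace_pauli_mul]
  rw [Matrix.one_apply]
  have h2n : (2:ℂ)^n ≠ 0 := pow_ne_zero _ two_ne_zero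
  by_cases h : r = s
  · rw [if_pos h, if_pos ⟨by rw [h], by rw [h]⟩]
    field_simp
  · rw [if_neg h, if_neg, mul_zero]
    intro ⟨h1, h2⟩
    exact h (Prod.ext h1 h2)

lemma chan_conjTranspose_apply (U : Matrix (QVec n) (QVec n) ℂ)
    (r s : QVec n × QVec n) : chan Uᴴ r s = chan U s r := by
  rw [chan_apply, chan_apply]
  rw [Matrix.conjTranspose_conjTranspose]
  refine congrArg (fun t => ((1:ℂ)/2^n) * t) ?_
  rw [show Pauli r.1 r.2 * Uᴴ * Pauli s.1 s.2 * U
      = (Pauli r.1 r.2 * Uᴴ) * (Pauli s.1 s.2 * U) from by simp only [Matrix.mul_assoc],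
    Matrix.trace_mul_comm,
    show (Pauli s.1 s.2 * U) * (Pauli r.1 r.2 * Uᴴ)
      = Pauli s.1 s.2 * U * Pauli r.1 r.2 * Uᴴ from by simp only [Matrix.mul_assoc]]

lemma chan_real (U : Matrix (QVec n) (QVec n) ℂ) (r s : QVec n × QVec n) :
    (starRingEnd ℂ) (chan U r s) = chan U r s := by
  rw [chan_apply, _root_.map_mul]
  have h1 : (starRingEnd ℂ) ((1:ℂ)/2^n) = ((1:ℂ)/2^n) := by
    rw [map_div₀, map_pow]
    norm_num
    rw [show ((2:ℂ)) = ((2:ℝ) : ℂ) from by norm_num, Complex.conj_ofReal]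
  have h2 : (starRingEnd ℂ) (Matrix.trace (Pauli r.1 r.2 * U * Pauli s.1 s.2 * Uᴴ))
      = Matrix.trace ((Pauli r.1 r.2 * U * Pauli s.1 s.2 * Uᴴ)ᴴ) := by
    rw [Matrix.trace_conjTranspose]
    rfl
  rw [h2, h1]
  refine congrArg (fun t => ((1:ℂ)/2^n) * t) ?_
  simp only [Matrix.conjTranspose_mul, Matrix.conjTranspose_conjTranspose,
    pauli_conjTranspose]
  rw [show U * (Pauli s.1 s.2 * (Uᴴ * Pauli r.1 r.2))
      = (U * (Pauli s.1 s.2 * Uᴴ)) * Pauli r.1 r.2 from by simp only [Matrix.mul_assoc],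
    Matrix.trace_mul_comm]
  simp only [Matrix.mul_assoc]

/-- Gaussian integers inside `ℂ`. -/
def GI (x : ℂ) : Prop := ∃ a b : ℤ, x = (a : ℂ) + (b : ℂ) * Complex.I

lemma GI_intCast (a : ℤ) : GI (a : ℂ) := ⟨a, 0, by push_cast; ring⟩
lemma GI_zero : GI 0 := by simpa using GI_intCast 0
lemma GI_one : GI 1 := by simpa using GI_intCast 1
lemma GI_neg_one : GI (-1) := by simpa using GI_intCast (-1)
lemma GI_I : GI Complex.I := ⟨0, 1, by push_cast; ring⟩
lemma GI_neg {x : ℂ} (h : GI x) : GI (-x) := by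
  obtain ⟨a, b, rfl⟩ := h; exact ⟨-a, -b, by push_cast; ring⟩
lemma GI_add {x y : ℂ} (hx : GI x) (hy : GI y) : GI (x + y) := by
  obtain ⟨a, b, rfl⟩ := hx; obtain ⟨c, d, rfl⟩ := hy
  exact ⟨a + c, b + d, by push_cast; ring⟩
lemma GI_mul {x y : ℂ} (hx : GI x) (hy : GI y) : GI (x * y) := by
  obtain ⟨a, b, rfl⟩ := hx; obtain ⟨c, d, rfl⟩ := hy
  refine ⟨a * c - b * d, a * d + b * c, ?_⟩
  push_cast
  linear_combination ((b : ℂ) * d) * Complex.I_sq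
lemma GI_pow {x : ℂ} (h : GI x) (k : ℕ) : GI (x ^ k) := by
  induction k with
  | zero => simpa using GI_one
  | succ m ih => rw [pow_succ]; exact GI_mul ih h
lemma GI_neg_I : GI (-Complex.I) := GI_neg GI_I
lemma GI_real_int {x : ℂ} (h : GI x) (hre : (starRingEnd ℂ) x = x) : ∃ a : ℤ, x = (a : ℂ) := by
  obtain ⟨a, b, rfl⟩ := h
  have him : ((a : ℂ) + (b : ℂ) * Complex.I).im = b := by simp
  have him0 : ((a : ℂ) + (b : ℂ) * Complex.I).im = 0 := by
    have := Complex.conj_eq_iff_im.mp hre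
    exact this
  rw [him] at him0
  refine ⟨a, ?_⟩
  norm_cast at him0
  rw [him0]
  push_cast
  ring

/-- "Dyadic with denominator exponent at most k". -/
def DyE (k : ℕ) (x : ℂ) : Prop := ∃ a : ℤ, (2:ℂ) ^ k * x = (a : ℂ)

lemma DyE_mono {j k : ℕ} (hjk : j ≤ k) {x : ℂ} (h : DyE j x) : DyE k x := by
  obtain ⟨a, ha⟩ := h
  refine ⟨2 ^ (k - j) * a, ?_⟩
  have : (2:ℂ) ^ k = 2 ^ (k - j) * 2 ^ j := by
    rw [← pow_add, Nat.sub_add_cancel hjk]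
  rw [this, mul_assoc, ha]
  push_cast
  ring
lemma DyE_add {k : ℕ} {x y : ℂ} (hx : DyE k x) (hy : DyE k y) : DyE k (x + y) := by
  obtain ⟨a, ha⟩ := hx; obtain ⟨b, hb⟩ := hy
  exact ⟨a + b, by rw [mul_add, ha, hb]; push_cast; ring⟩
lemma DyE_zero (k : ℕ) : DyE k 0 := ⟨0, by simp⟩
lemma DyE_mul {j k : ℕ} {x y : ℂ} (hx : DyE j x) (hy : DyE k y) : DyE (j + k) (x * y) := by
  obtain ⟨a, ha⟩ := hx; obtain ⟨b, hb⟩ := hy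
  refine ⟨a * b, ?_⟩
  rw [pow_add]
  calc (2:ℂ) ^ j * 2 ^ k * (x * y) = ((2:ℂ)^j * x) * ((2:ℂ)^k * y) := by ring
    _ = (a : ℂ) * (b : ℂ) := by rw [ha, hb]
    _ = ((a * b : ℤ) : ℂ) := by push_cast; ring
lemma DyE_sum {k : ℕ} {ι : Type*} (s : Finset ι) (f : ι → ℂ)
    (h : ∀ i ∈ s, DyE k (f i)) : DyE k (∑ i ∈ s, f i) := by
  classical
  induction s using Finset.induction_on with
  | empty => simpa using DyE_zero k
  | insert a t hx ih =>
    rw [Finset.sum_insert hx]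
    exact DyE_add (h a (Finset.mem_insert_self a t))
      (ih fun i hi => h i (Finset.mem_insert_of_mem hi))

lemma sde2_le {k : ℕ} {x : ℂ} (h : DyE k x) : sde2 x ≤ k := Nat.sInf_le h

lemma sde2_self {x : ℂ} (h : ∃ k, DyE k x) : DyE (sde2 x) x := by
  obtain ⟨k, hk⟩ := h
  exact Nat.sInf_mem (⟨k, hk⟩ : Set.Nonempty {k : ℕ | ∃ a : ℤ, (2:ℂ) ^ k * x = (a : ℂ)})

lemma sde2Mat_le {ι : Type*} [Fintype ι] {M : Matrix ι ι ℂ} {k : ℕ}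
    (h : ∀ p q, DyE k (M p q)) : sde2Mat M ≤ k :=
  Finset.sup_le fun p _ => sde2_le (h p.1 p.2)

lemma sde2Mat_entry {ι : Type*} [Fintype ι] {M : Matrix ι ι ℂ}
    (h : ∀ p q, ∃ k, DyE k (M p q)) (p q : ι) : DyE (sde2Mat M) (M p q) := by
  refine DyE_mono ?_ (sde2_self (h p q))
  exact Finset.le_sup (f := fun t : ι × ι => sde2 (M t.1 t.2)) (Finset.mem_univ (p, q))
lemma pauli_swap (a b c d : QVec n) :
    ∃ s : ℂ, (s = 1 ∨ s = -1) ∧ Pauli c d * Pauli a b = s • (Pauli a b * Pauli c d) := by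
  refine ⟨(-1:ℂ) ^ dotN b c * (-1:ℂ) ^ dotN d a, ?_, ?_⟩
  · rcases Nat.even_or_odd (dotN b c) with h | h <;>
      rcases Nat.even_or_odd (dotN d a) with h' | h' <;>
      rw [h.neg_one_pow, h'.neg_one_pow] <;> norm_num
  · rw [pauli_mul a b c d, pauli_mul c d a b, smul_smul]
    rw [show c + a = a + c from add_comm c a, show d + b = b + d from add_comm d b]
    congr 1
    unfold phase
    rw [show c + a = a + c from add_comm c a, show d + b = b + d from add_comm d b]
    rw [show dotN c d + dotN a b = dotN a b + dotN c d from Nat.add_comm _ _]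
    rw [dotN_comm d a]
    have e1 : ((-1:ℂ)) ^ (dotN b c * 2) = 1 := by
      rw [mul_comm, pow_mul]; norm_num
    linear_combination (-(Complex.I ^ dotN a b * Complex.I ^ dotN c d *
      Complex.I ^ dotN (a+c) (b+d) * (-1:ℂ) ^ dotN a d *
      (-1:ℂ) ^ dotN (a+c) (b+d))) * e1

section Galg

variable (P Q₁ Q₂ : Matrix (QVec n) (QVec n) ℂ) (s₁ s₂ : ℂ)

lemma G_expand (q₁ : Q₁ * Q₁ = 1) (q₂ : Q₂ * Q₂ = 1) (hcc : Q₂ * Q₁ = Q₁ * Q₂)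
    (h₁ : Q₁ * P = s₁ • (P * Q₁)) (h₂ : Q₂ * P = s₂ • (P * Q₂)) (α β γ δ : ℂ) :
    (α • (1 : Matrix (QVec n) (QVec n) ℂ) + β • (Q₁ + Q₂ - Q₁ * Q₂)) * P *
      (γ • (1 : Matrix (QVec n) (QVec n) ℂ) + δ • (Q₁ + Q₂ - Q₁ * Q₂))
    = (α*γ + β*δ*(s₁+s₂+s₁*s₂)) • P
      + (α*δ + γ*β*s₁ - β*δ*(s₂+s₁*s₂)) • (P * Q₁)
      + (α*δ + γ*β*s₂ - β*δ*(s₁+s₁*s₂)) • (P * Q₂)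
      + (-(α*δ) - γ*β*(s₁*s₂) + β*δ*(s₁+s₂)) • (P * (Q₁ * Q₂)) := by
  have h₃ : (Q₁ * Q₂) * P = (s₁ * s₂) • (P * (Q₁ * Q₂)) := by
    rw [mul_assoc, h₂, mul_smul_comm, ← mul_assoc, h₁, smul_mul_assoc, smul_smul,
      mul_comm s₂ s₁, mul_assoc]
  have q1A : Q₁ * (Q₁ + Q₂ - Q₁ * Q₂) = 1 + Q₁ * Q₂ - Q₂ := by
    rw [mul_sub, mul_add, q₁, ← mul_assoc, q₁, one_mul]
  have q2A : Q₂ * (Q₁ + Q₂ - Q₁ * Q₂) = Q₁ * Q₂ + 1 - Q₁ := by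
    rw [mul_sub, mul_add, q₂, hcc, ← mul_assoc, hcc, mul_assoc, q₂, mul_one]
  have q3A : (Q₁ * Q₂) * (Q₁ + Q₂ - Q₁ * Q₂) = Q₂ + Q₁ - 1 := by
    have e1 : (Q₁ * Q₂) * Q₁ = Q₂ := by
      rw [mul_assoc, hcc, ← mul_assoc, q₁, one_mul]
    have e2 : (Q₁ * Q₂) * Q₂ = Q₁ := by
      rw [mul_assoc, q₂, mul_one]
    rw [mul_sub, mul_add, e1, e2, ← mul_assoc, e1, q₂]
  have hAP : (Q₁ + Q₂ - Q₁ * Q₂) * P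
      = s₁ • (P * Q₁) + s₂ • (P * Q₂) - (s₁ * s₂) • (P * (Q₁ * Q₂)) := by
    rw [sub_mul, add_mul, h₁, h₂, h₃]
  have hPA : P * (Q₁ + Q₂ - Q₁ * Q₂) = P * Q₁ + P * Q₂ - P * (Q₁ * Q₂) := by
    rw [mul_sub, mul_add]
  have hAPA : ((Q₁ + Q₂ - Q₁ * Q₂) * P) * (Q₁ + Q₂ - Q₁ * Q₂)
      = (s₁+s₂+s₁*s₂) • P + (-s₂-s₁*s₂) • (P * Q₁) + (-s₁-s₁*s₂) • (P * Q₂)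
        + (s₁+s₂) • (P * (Q₁ * Q₂)) := by
    rw [hAP, sub_mul, add_mul, smul_mul_assoc, smul_mul_assoc, smul_mul_assoc,
      mul_assoc, mul_assoc, mul_assoc, q1A, q2A, q3A]
    simp only [mul_add, mul_sub, mul_one]
    module
  have expand1 : (α • (1 : Matrix (QVec n) (QVec n) ℂ) + β • (Q₁ + Q₂ - Q₁ * Q₂)) * P
      = α • P + β • ((Q₁ + Q₂ - Q₁ * Q₂) * P) := by
    rw [add_mul, smul_mul_assoc, smul_mul_assoc, one_mul]
  rw [expand1, mul_add, add_mul, add_mul]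
  simp only [mul_smul_comm, smul_mul_assoc, mul_one, smul_smul]
  rw [hAPA, hPA, hAP]
  module

end Galg

lemma Ggate_conjTranspose (Q₁ Q₂ : Matrix (QVec n) (QVec n) ℂ)
    (h₁ : Q₁ᴴ = Q₁) (h₂ : Q₂ᴴ = Q₂) (hcc : Q₂ * Q₁ = Q₁ * Q₂) :
    (Ggate Q₁ Q₂)ᴴ = ((3 - Complex.I)/4) • (1 : Matrix (QVec n) (QVec n) ℂ)
      + ((1 + Complex.I)/4) • (Q₁ + Q₂ - Q₁ * Q₂) := by
  unfold Ggate
  rw [Matrix.conjTranspose_add, Matrix.conjTranspose_smul, Matrix.conjTranspose_smul,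
    Matrix.conjTranspose_one, Matrix.conjTranspose_sub, Matrix.conjTranspose_add,
    Matrix.conjTranspose_mul, h₁, h₂, hcc]
  have hs1 : star ((3 + Complex.I)/4) = (3 - Complex.I)/4 := by
    rw [Complex.star_def, map_div₀, map_add, Complex.conj_I, map_ofNat, map_ofNat]
    ring
  have hs2 : star ((1 - Complex.I)/4) = (1 + Complex.I)/4 := by
    rw [Complex.star_def, map_div₀, map_sub, Complex.conj_I, _root_.map_one, map_ofNat]
    ring
  rw [hs1, hs2]

lemma Ggate_mul_conjTranspose (Q₁ Q₂ : Matrix (QVec n) (QVec n) ℂ)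
    (hH₁ : Q₁ᴴ = Q₁) (hH₂ : Q₂ᴴ = Q₂)
    (q₁ : Q₁ * Q₁ = 1) (q₂ : Q₂ * Q₂ = 1) (hcc : Q₂ * Q₁ = Q₁ * Q₂) :
    Ggate Q₁ Q₂ * (Ggate Q₁ Q₂)ᴴ = 1 := by
  rw [Ggate_conjTranspose Q₁ Q₂ hH₁ hH₂ hcc]
  rw [show Ggate Q₁ Q₂ * (((3 - Complex.I)/4) • (1 : Matrix (QVec n) (QVec n) ℂ)
      + ((1 + Complex.I)/4) • (Q₁ + Q₂ - Q₁ * Q₂))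
    = Ggate Q₁ Q₂ * 1 * (((3 - Complex.I)/4) • (1 : Matrix (QVec n) (QVec n) ℂ)
      + ((1 + Complex.I)/4) • (Q₁ + Q₂ - Q₁ * Q₂)) from by rw [mul_one]]
  unfold Ggate
  rw [G_expand (1 : Matrix (QVec n) (QVec n) ℂ) Q₁ Q₂ 1 1 q₁ q₂ hcc (by simp) (by simp)]
  simp only [one_mul]
  match_scalars
  · linear_combination (-(1:ℂ)/4) * Complex.I_sq
  · linear_combination ((1:ℂ)/4) * Complex.I_sq
  · linear_combination ((1:ℂ)/4) * Complex.I_sq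
  · linear_combination (-(1:ℂ)/4) * Complex.I_sq
lemma phase_GI (a b c d : QVec n) : GI (phase a b c d) :=
  GI_mul (GI_mul (GI_pow GI_I _) (GI_pow GI_neg_one _)) (GI_pow GI_neg_I _)

lemma DyE_one_of {x : ℂ} (hGI : GI (2*x)) (hre : (starRingEnd ℂ) x = x) : DyE 1 x := by
  have h2 : (starRingEnd ℂ) (2*x) = 2*x := by rw [_root_.map_mul, hre, map_ofNat]
  obtain ⟨a, ha⟩ := GI_real_int hGI h2
  exact ⟨a, by rw [pow_one]; exact ha⟩

lemma collapse {c t : ℂ} :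
    2 * (((1:ℂ)/2^n) * (c*((2:ℂ)^n*t))) = (2*c)*t := by
  have h2n : (2:ℂ)^n ≠ 0 := pow_ne_zero _ two_ne_zero
  field_simp

lemma chan_Ggate_dyE (a₁ b₁ a₂ b₂ : QVec n)
    (hcc : Pauli a₂ b₂ * Pauli a₁ b₁ = Pauli a₁ b₁ * Pauli a₂ b₂)
    (r s : QVec n × QVec n) :
    DyE 1 (chan (Ggate (Pauli a₁ b₁) (Pauli a₂ b₂)) r s) := by
  refine DyE_one_of ?_ (chan_real _ r s)
  obtain ⟨s₁, hs₁, h₁⟩ := pauli_swap s.1 s.2 a₁ b₁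
  obtain ⟨s₂, hs₂, h₂⟩ := pauli_swap s.1 s.2 a₂ b₂
  rw [chan_apply]
  rw [Ggate_conjTranspose _ _ (pauli_conjTranspose a₁ b₁) (pauli_conjTranspose a₂ b₂) hcc]
  rw [show Pauli r.1 r.2 * Ggate (Pauli a₁ b₁) (Pauli a₂ b₂) * Pauli s.1 s.2 *
        (((3 - Complex.I)/4) • (1 : Matrix (QVec n) (QVec n) ℂ)
          + ((1 + Complex.I)/4) • (Pauli a₁ b₁ + Pauli a₂ b₂ - Pauli a₁ b₁ * Pauli a₂ b₂))
      = Pauli r.1 r.2 * (Ggate (Pauli a₁ b₁) (Pauli a₂ b₂) * Pauli s.1 s.2 *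
        (((3 - Complex.I)/4) • (1 : Matrix (QVec n) (QVec n) ℂ)
          + ((1 + Complex.I)/4) • (Pauli a₁ b₁ + Pauli a₂ b₂ - Pauli a₁ b₁ * Pauli a₂ b₂)))
      from by simp only [Matrix.mul_assoc]]
  unfold Ggate
  rw [G_expand (Pauli s.1 s.2) (Pauli a₁ b₁) (Pauli a₂ b₂) s₁ s₂
    (pauli_sq a₁ b₁) (pauli_sq a₂ b₂) hcc h₁ h₂]
  simp only [mul_add, mul_smul_comm, Matrix.trace_add, Matrix.trace_smul, smul_eq_mul]
  have e0 : Matrix.trace (Pauli r.1 r.2 * Pauli s.1 s.2)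
      = (2:ℂ)^n * (if r.1 = s.1 ∧ r.2 = s.2 then (1:ℂ) else 0) := by
    rw [trace_pauli_mul]; split <;> ring
  have e1 : Matrix.trace (Pauli r.1 r.2 * (Pauli s.1 s.2 * Pauli a₁ b₁))
      = (2:ℂ)^n * (phase s.1 s.2 a₁ b₁ *
        (if r.1 = s.1 + a₁ ∧ r.2 = s.2 + b₁ then (1:ℂ) else 0)) := by
    rw [pauli_mul s.1 s.2 a₁ b₁, mul_smul_comm, Matrix.trace_smul, smul_eq_mul,
      trace_pauli_mul]
    split <;> ring
  have e2 : Matrix.trace (Pauli r.1 r.2 * (Pauli s.1 s.2 * Pauli a₂ b₂))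
      = (2:ℂ)^n * (phase s.1 s.2 a₂ b₂ *
        (if r.1 = s.1 + a₂ ∧ r.2 = s.2 + b₂ then (1:ℂ) else 0)) := by
    rw [pauli_mul s.1 s.2 a₂ b₂, mul_smul_comm, Matrix.trace_smul, smul_eq_mul,
      trace_pauli_mul]
    split <;> ring
  have e3 : Matrix.trace (Pauli r.1 r.2 * (Pauli s.1 s.2 * (Pauli a₁ b₁ * Pauli a₂ b₂)))
      = (2:ℂ)^n * (phase a₁ b₁ a₂ b₂ * (phase s.1 s.2 (a₁+a₂) (b₁+b₂) *
        (if r.1 = s.1 + (a₁+a₂) ∧ r.2 = s.2 + (b₁+b₂) then (1:ℂ) else 0))) := by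
    rw [pauli_mul a₁ b₁ a₂ b₂, mul_smul_comm, mul_smul_comm, Matrix.trace_smul, smul_eq_mul,
      pauli_mul s.1 s.2 (a₁+a₂) (b₁+b₂), mul_smul_comm, Matrix.trace_smul, smul_eq_mul,
      trace_pauli_mul]
    split <;> ring
  rw [e0, e1, e2, e3, collapse, collapse, collapse, collapse]
  have ht0 : GI (if r.1 = s.1 ∧ r.2 = s.2 then (1:ℂ) else 0) := by
    split; exacts [GI_one, GI_zero]
  have ht1 : GI (phase s.1 s.2 a₁ b₁ *
      (if r.1 = s.1 + a₁ ∧ r.2 = s.2 + b₁ then (1:ℂ) else 0)) := by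
    refine GI_mul (phase_GI _ _ _ _) ?_
    split; exacts [GI_one, GI_zero]
  have ht2 : GI (phase s.1 s.2 a₂ b₂ *
      (if r.1 = s.1 + a₂ ∧ r.2 = s.2 + b₂ then (1:ℂ) else 0)) := by
    refine GI_mul (phase_GI _ _ _ _) ?_
    split; exacts [GI_one, GI_zero]
  have ht3 : GI (phase a₁ b₁ a₂ b₂ * (phase s.1 s.2 (a₁+a₂) (b₁+b₂) *
      (if r.1 = s.1 + (a₁+a₂) ∧ r.2 = s.2 + (b₁+b₂) then (1:ℂ) else 0))) := by
    refine GI_mul (phase_GI _ _ _ _) (GI_mul (phase_GI _ _ _ _) ?_)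
    split; exacts [GI_one, GI_zero]
  rcases hs₁ with h | h <;> rcases hs₂ with h' | h' <;> subst h <;> subst h'
  · refine GI_add (GI_add (GI_add (GI_mul ⟨2, 0, ?_⟩ ht0) (GI_mul ⟨0, 0, ?_⟩ ht1))
      (GI_mul ⟨0, 0, ?_⟩ ht2)) (GI_mul ⟨0, 0, ?_⟩ ht3)
    · push_cast; linear_combination (-(1:ℂ)/2) * Complex.I_sq
    · push_cast; linear_combination ((1:ℂ)/2) * Complex.I_sq
    · push_cast; linear_combination ((1:ℂ)/2) * Complex.I_sq
    · push_cast; linear_combination (-(1:ℂ)/2) * Complex.I_sq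
  · refine GI_add (GI_add (GI_add (GI_mul ⟨1, 0, ?_⟩ ht0) (GI_mul ⟨1, 0, ?_⟩ ht1))
      (GI_mul ⟨0, 1, ?_⟩ ht2)) (GI_mul ⟨0, -1, ?_⟩ ht3)
    all_goals push_cast; ring_nf
  · refine GI_add (GI_add (GI_add (GI_mul ⟨1, 0, ?_⟩ ht0) (GI_mul ⟨0, 1, ?_⟩ ht1))
      (GI_mul ⟨1, 0, ?_⟩ ht2)) (GI_mul ⟨0, -1, ?_⟩ ht3)
    all_goals push_cast; ring_nf
  · refine GI_add (GI_add (GI_add (GI_mul ⟨1, 0, ?_⟩ ht0) (GI_mul ⟨0, 1, ?_⟩ ht1))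
      (GI_mul ⟨0, 1, ?_⟩ ht2)) (GI_mul ⟨-1, 0, ?_⟩ ht3)
    all_goals push_cast; ring_nf
lemma chan_clifford_dyE {C : Matrix (QVec n) (QVec n) ℂ} (hC : IsClifford C)
    (r s : QVec n × QVec n) : DyE 0 (chan C r s) := by
  obtain ⟨a', b', ε, hε, hconj⟩ := hC.2 s.1 s.2
  rw [chan_apply]
  rw [show Pauli r.1 r.2 * C * Pauli s.1 s.2 * Cᴴ
      = Pauli r.1 r.2 * (C * Pauli s.1 s.2 * Cᴴ) from by simp only [Matrix.mul_assoc]]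
  rw [show Pauli r.1 r.2 * (C * Pauli s.1 s.2 * Cᴴ)
      = Pauli r.1 r.2 * (ε • Pauli a' b') from by rw [hconj]]
  rw [mul_smul_comm, Matrix.trace_smul, smul_eq_mul, trace_pauli_mul]
  have h2n : (2:ℂ)^n ≠ 0 := pow_ne_zero _ two_ne_zero
  rcases hε with h | h <;> subst h <;> split
  · exact ⟨1, by push_cast; field_simp⟩
  · exact ⟨0, by norm_num⟩
  · exact ⟨-1, by push_cast; field_simp⟩
  · exact ⟨0, by norm_num⟩

lemma pauli_diag (b : QVec n) :
    Pauli 0 b = Matrix.diagonal (fun y => (-1:ℂ) ^ dotN b y) := by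
  ext x y
  rw [Matrix.diagonal_apply]
  simp only [Pauli, add_zero, dotN_zero_left, pow_zero, one_mul]
  by_cases h : x = y
  · subst h; rw [if_pos rfl]
  · rw [if_neg h, if_neg h]

lemma diag_pauli_comm (b b' : QVec n) :
    Pauli 0 b' * Pauli 0 b = Pauli 0 b * Pauli 0 b' := by
  rw [pauli_diag, pauli_diag, Matrix.diagonal_mul_diagonal, Matrix.diagonal_mul_diagonal,
    show (fun i => (-1:ℂ) ^ dotN b' i * (-1:ℂ) ^ dotN b i)
      = (fun i => (-1:ℂ) ^ dotN b i * (-1:ℂ) ^ dotN b' i) from funext fun i => mul_comm _ _]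

lemma dotN_single (k : ℕ) (hk : k < n) (x : QVec n) :
    dotN (fun i => if (i:ℕ) = k then 1 else 0) x = (x ⟨k, hk⟩).val := by
  unfold dotN
  rw [Finset.sum_eq_single (⟨k, hk⟩ : Fin n)]
  · show (if ((⟨k, hk⟩ : Fin n) : ℕ) = k then (1 : ZMod 2) else 0).val * (x ⟨k, hk⟩).val
      = (x ⟨k, hk⟩).val
    rw [if_pos rfl, ZMod.val_one, one_mul]
  · intro i _ hi
    show (if (i : ℕ) = k then (1 : ZMod 2) else 0).val * (x i).val = 0
    rw [if_neg (fun hh => hi (Fin.ext hh)), ZMod.val_zero, zero_mul]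
  · intro h; exact absurd (Finset.mem_univ _) h

lemma csgate_eq (hn : 2 ≤ n) :
    CSgate n = Ggate (Pauli 0 (fun i => if (i:ℕ) = 0 then 1 else 0))
      (Pauli 0 (fun i => if (i:ℕ) = 1 then 1 else 0)) := by
  have h1n : 1 < n := lt_of_lt_of_le one_lt_two hn
  unfold CSgate Ggate
  simp only [dif_pos h1n]
  rw [pauli_diag, pauli_diag, Matrix.diagonal_mul_diagonal]
  ext x y
  simp only [Matrix.add_apply, Matrix.smul_apply, Matrix.sub_apply, Matrix.one_apply,
    Matrix.diagonal_apply, smul_eq_mul]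
  by_cases hxy : x = y
  · subst hxy
    rw [if_pos rfl, if_pos rfl, if_pos rfl, if_pos rfl, if_pos rfl]
    rw [dotN_single 0 (Nat.lt_of_lt_of_le Nat.zero_lt_one h1n.le) x, dotN_single 1 h1n x]
    rcases zmod2_cases (x ⟨0, Nat.lt_of_lt_of_le Nat.zero_lt_one h1n.le⟩) with hx0 | hx0 <;>
      rcases zmod2_cases (x ⟨1, h1n⟩) with hx1 | hx1 <;>
      rw [hx0, hx1] <;>
      simp only [ZMod.val_zero, ZMod.val_one, pow_zero, pow_one] <;>
      norm_num <;>
      first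
        | ring
        | (rw [if_neg (by decide)]; ring)
        | (rw [if_pos (by decide)]; ring)
  · rw [if_neg hxy, if_neg hxy, if_neg hxy, if_neg hxy, if_neg hxy]
    ring

lemma chan_mem_dyadic (hn : 2 ≤ n) (U : Matrix.unitaryGroup (QVec n) ℂ)
    (hU : U ∈ CliffordCSGroup n) :
    ∀ r s, ∃ k, DyE k (chan (U : Matrix (QVec n) (QVec n) ℂ) r s) := by
  unfold CliffordCSGroup at hU
  induction hU using Subgroup.closure_induction with
  | mem x hx =>
    rcases hx with h | h
    · exact fun r s => ⟨0, chan_clifford_dyE h r s⟩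
    · intro r s
      rw [h, csgate_eq hn]
      exact ⟨1, chan_Ggate_dyE _ _ _ _ (diag_pauli_comm _ _) r s⟩
  | one =>
    intro r s
    rw [Matrix.UnitaryGroup.one_val, chan_one]
    refine ⟨0, ?_⟩
    rw [Matrix.one_apply]
    split
    · exact ⟨1, by norm_num⟩
    · exact ⟨0, by norm_num⟩
  | mul x y hx hy ihx ihy =>
    intro r s
    rw [Matrix.UnitaryGroup.mul_val, chan_mul, Matrix.mul_apply]
    refine ⟨sde2Mat (chan (x : Matrix (QVec n) (QVec n) ℂ))
      + sde2Mat (chan (y : Matrix (QVec n) (QVec n) ℂ)), ?_⟩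
    exact DyE_sum _ _ fun t _ =>
      DyE_mul (sde2Mat_entry ihx r t) (sde2Mat_entry ihy t s)
  | inv x hx ih =>
    intro r s
    rw [show ((x⁻¹ : Matrix.unitaryGroup (QVec n) ℂ) : Matrix (QVec n) (QVec n) ℂ)
        = (x : Matrix (QVec n) (QVec n) ℂ)ᴴ from rfl]
    rw [chan_conjTranspose_apply]
    exact ih s r

end SdeAux

open SdeAux in
/-- For `n ≥ 2`, `U′` in the Clifford+CS group and distinct commuting non-identity
Pauli matrices `P₁, P₂`, `sde₂(Ĝ_{P₁P₂}·Û′) − sde₂(Û′) ∈ {−1, 0, 1}`. -/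
theorem sde2_change (n : ℕ) (hn : 2 ≤ n) (U : Matrix.unitaryGroup (QVec n) ℂ)
    (hU : U ∈ CliffordCSGroup n) (a₁ b₁ a₂ b₂ : QVec n)
    (h₁ : Pauli a₁ b₁ ≠ 1) (h₂ : Pauli a₂ b₂ ≠ 1)
    (hne : Pauli a₁ b₁ ≠ Pauli a₂ b₂)
    (hc : Commute (Pauli a₁ b₁) (Pauli a₂ b₂)) :
    (sde2Mat (chan (Ggate (Pauli a₁ b₁) (Pauli a₂ b₂)) *
          chan (U : Matrix (QVec n) (QVec n) ℂ)) : ℤ) -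
        (sde2Mat (chan (U : Matrix (QVec n) (QVec n) ℂ)) : ℤ) ∈
      ({-1, 0, 1} : Set ℤ) := by
  have hcc : Pauli a₂ b₂ * Pauli a₁ b₁ = Pauli a₁ b₁ * Pauli a₂ b₂ := hc.symm.eq
  set M := chan (U : Matrix (QVec n) (QVec n) ℂ) with hMdef
  set G2 := chan (Ggate (Pauli a₁ b₁) (Pauli a₂ b₂)) with hG2def
  have hMdy : ∀ r s, ∃ k, DyE k (M r s) := chan_mem_dyadic hn U hU
  have hGdy : ∀ r s, DyE 1 (G2 r s) := chan_Ggate_dyE a₁ b₁ a₂ b₂ hcc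
  have hProd : ∀ r s, DyE (1 + sde2Mat M) ((G2 * M) r s) := by
    intro r s
    rw [Matrix.mul_apply]
    exact DyE_sum _ _ fun t _ => DyE_mul (hGdy r t) (sde2Mat_entry hMdy t s)
  have hup : sde2Mat (G2 * M) ≤ 1 + sde2Mat M := sde2Mat_le hProd
  have hGH : Ggate (Pauli a₁ b₁) (Pauli a₂ b₂) * (Ggate (Pauli a₁ b₁) (Pauli a₂ b₂))ᴴ = 1 :=
    Ggate_mul_conjTranspose _ _ (pauli_conjTranspose _ _) (pauli_conjTranspose _ _)
      (pauli_sq _ _) (pauli_sq _ _) hcc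
  have hHG : (Ggate (Pauli a₁ b₁) (Pauli a₂ b₂))ᴴ * Ggate (Pauli a₁ b₁) (Pauli a₂ b₂) = 1 :=
    mul_eq_one_comm.mp hGH
  have hrec : chan ((Ggate (Pauli a₁ b₁) (Pauli a₂ b₂))ᴴ) * (G2 * M) = M := by
    rw [hG2def, ← Matrix.mul_assoc, ← chan_mul, hHG, chan_one, Matrix.one_mul]
  have hM2 : ∀ r s, DyE (1 + sde2Mat (G2 * M)) (M r s) := by
    intro r s
    have h1 : DyE (1 + sde2Mat (G2 * M))
        ((chan ((Ggate (Pauli a₁ b₁) (Pauli a₂ b₂))ᴴ) * (G2 * M)) r s) := by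
      rw [Matrix.mul_apply]
      refine DyE_sum _ _ fun t _ => DyE_mul ?_
        (sde2Mat_entry (fun p q => ⟨_, hProd p q⟩) t s)
      rw [chan_conjTranspose_apply]
      exact hGdy t r
    rwa [hrec] at h1
  have hdown : sde2Mat M ≤ 1 + sde2Mat (G2 * M) := sde2Mat_le hM2
  simp only [Set.mem_insert_iff, Set.mem_singleton_iff]
  omega
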